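/- arXiv:2201.11150 — 5 statements merged into one kernel-verified Lean document; each statement's English description precedes it below -/
import Mathlib

section
/- Let q ≥ 2 and N ≥ s ≥ 1 be integers, let δ > 0 be a real number, and let p ∈ Σ^N. If q^s ≥ N^{2+δ}, then |O_p| ≥ q^N · (1 − N^{−δ}). -/
/-- The length-`s` window of the string `x` at location `i`. -/
def win {α : Type*} (x : List α) (i s : ℕ) : List α := (x.drop i).take s

/-- `x ⊥ₛ y`: no length-`s` window of `x` equals a length-`s` window of `y`. -/
def perp {α : Type*} (s : ℕ) (x y : List α) : Prop :=
  ∀ i j, i + s ≤ x.length → j + s ≤ y.length → win x i s ≠ win y j s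

/-- `O_p`: the set of strings of length `N` over `ZMod q` all of whose length-`s` windows
differ from every length-`s` window of `p`. -/
def Op (q N s : ℕ) (p : List (ZMod q)) : Set (List (ZMod q)) :=
  {c | c.length = N ∧ perp s c p}

/-!
A string `c` of length `N` fails `c ⊥ₛ p` only if some window of `c` equals some window of `p`.
Fixing the two window locations pins down `s` letters of `c`, leaving at most `q ^ (N - s)`
strings, and there are at most `N ^ 2` pairs of locations. So at most
`N ^ 2 q ^ (N - s) ≤ q ^ N N ^ (-δ)` strings of length `N` lie outside `O_p`.
-/

open Set

section Windows

variable {α : Type*}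

theorem take_append_win_append_drop (c : List α) (i s : ℕ) :
    c.take i ++ win c i s ++ c.drop (i + s) = c := by
  rw [win, List.append_assoc, ← List.drop_drop, List.take_append_drop, List.take_append_drop]

theorem ncard_length_eq [Fintype α] (n : ℕ) :
    {l : List α | l.length = n}.ncard = Fintype.card α ^ n := by
  rw [← Nat.card_coe_set_eq, ← card_vector, ← Nat.card_eq_fintype_card]
  exact Nat.card_congr (Equiv.refl _)

theorem ncard_length_eq_win_eq_le [Fintype α] {N i s : ℕ} (hi : i + s ≤ N) (w : List α) :
    {c : List α | c.length = N ∧ win c i s = w}.ncard ≤ Fintype.card α ^ (N - s) := by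
  rw [← ncard_length_eq]
  refine ncard_le_ncard_of_injOn (fun c => c.take i ++ c.drop (i + s)) ?_ ?_
    (List.finite_length_eq α _)
  · rintro c ⟨hc, -⟩
    simp only [mem_ofPred_eq, List.length_append, List.length_take, List.length_drop, hc]
    omega
  · rintro a ⟨ha, hwa⟩ b ⟨hb, hwb⟩ hab
    obtain ⟨htake, hdrop⟩ := List.append_inj hab (by simp only [List.length_take]; omega)
    rw [← take_append_win_append_drop a i s, ← take_append_win_append_drop b i s, htake, hdrop,
      hwa, hwb]

theorem ncard_not_perp_le [Fintype α] {N s : ℕ} (p : List α) :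
    {c : List α | c.length = N ∧ ¬ perp s c p}.ncard ≤
      (N + 1 - s) * (p.length + 1 - s) * Fintype.card α ^ (N - s) := by
  set I := Finset.range (N + 1 - s) ×ˢ Finset.range (p.length + 1 - s)
  have hcover : {c : List α | c.length = N ∧ ¬ perp s c p} ⊆
      ⋃ ij ∈ I, {c | c.length = N ∧ win c ij.1 s = win p ij.2 s} := by
    rintro c ⟨hc, hcp⟩
    simp only [perp, not_forall, not_not] at hcp
    obtain ⟨i, j, hi, hj, hij⟩ := hcp
    refine mem_biUnion (x := (i, j)) ?_ ⟨hc, hij⟩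
    simp only [I, Finset.coe_product, Finset.coe_range, mem_prod, mem_Iio]
    omega
  have hfin : (⋃ ij ∈ I, {c | c.length = N ∧ win c ij.1 s = win p ij.2 s}).Finite :=
    (List.finite_length_eq α N).subset (iUnion₂_subset fun _ _ _ hc => hc.1)
  calc _ ≤ _ := ncard_le_ncard hcover hfin
    _ ≤ ∑ ij ∈ I, {c : List α | c.length = N ∧ win c ij.1 s = win p ij.2 s}.ncard :=
      Finset.set_ncard_biUnion_le _ _
    _ ≤ ∑ _ij ∈ I, Fintype.card α ^ (N - s) := by
      refine Finset.sum_le_sum fun ij hij => ncard_length_eq_win_eq_le ?_ _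
      simp only [I, Finset.mem_product, Finset.mem_range] at hij
      omega
    _ = _ := by simp [I]

end Windows

theorem sq_le_mul_rpow_neg {x y δ : ℝ} (hx : 0 < x) (h : x ^ (2 + δ) ≤ y) :
    x ^ 2 ≤ y * x ^ (-δ) := by
  calc x ^ 2 = x ^ (2 + δ) * x ^ (-δ) := by
        rw [← Real.rpow_add hx, add_neg_cancel_right, Real.rpow_two]
    _ ≤ y * x ^ (-δ) := mul_le_mul_of_nonneg_right h (Real.rpow_nonneg hx.le _)

theorem stmt7_general (q N s : ℕ) (hq : 2 ≤ q) (hs : 1 ≤ s) (hsN : s ≤ N)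
    (δ : ℝ) (p : List (ZMod q)) (hp : p.length = N)
    (h : (N : ℝ) ^ ((2 : ℝ) + δ) ≤ (q : ℝ) ^ s) :
    (q : ℝ) ^ N * (1 - (N : ℝ) ^ (-δ)) ≤ ((Op q N s p).ncard : ℝ) := by
  have : NeZero q := ⟨by omega⟩
  set B := {c : List (ZMod q) | c.length = N ∧ ¬ perp s c p}
  have hsplit : ((Op q N s p).ncard : ℝ) + B.ncard = q ^ N := by
    have := ncard_inter_add_ncard_sdiff_eq_ncard {c : List (ZMod q) | c.length = N}
      {c | perp s c p} (List.finite_length_eq _ N)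
    rw [ncard_length_eq, ZMod.card] at this
    exact_mod_cast this
  have hB : B.ncard ≤ N ^ 2 * q ^ (N - s) :=
    calc B.ncard ≤ (N + 1 - s) * (p.length + 1 - s) * Fintype.card (ZMod q) ^ (N - s) :=
          ncard_not_perp_le p
      _ ≤ N ^ 2 * q ^ (N - s) := by
          rw [hp, ZMod.card, sq]
          gcongr <;> omega
  have hN : (0 : ℝ) < N := by exact_mod_cast (by omega : 0 < N)
  calc (q : ℝ) ^ N * (1 - (N : ℝ) ^ (-δ))
      = q ^ N - q ^ (N - s) * (q ^ s * (N : ℝ) ^ (-δ)) := by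
        rw [← mul_assoc, ← pow_add, Nat.sub_add_cancel hsN]; ring
    _ ≤ q ^ N - q ^ (N - s) * (N : ℝ) ^ 2 := by gcongr; exact sq_le_mul_rpow_neg hN h
    _ ≤ q ^ N - B.ncard := by
        gcongr
        rw [mul_comm]
        exact_mod_cast hB
    _ = (Op q N s p).ncard := by
        rw [← hsplit]; ring

/-- If `q^s ≥ N^{2+δ}` then `|O_p| ≥ q^N · (1 − N^{−δ})`. -/
theorem stmt7 (q N s : ℕ) (hq : 2 ≤ q) (hs : 1 ≤ s) (hsN : s ≤ N)
    (δ : ℝ) (hδ : 0 < δ) (p : List (ZMod q)) (hp : p.length = N)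
    (h : (N : ℝ) ^ ((2 : ℝ) + δ) ≤ (q : ℝ) ^ s) :
    (q : ℝ) ^ N * (1 - (N : ℝ) ^ (-δ)) ≤ ((Op q N s p).ncard : ℝ) :=
  stmt7_general q N s hq hs hsN δ p hp h
end

section
/- Let q ≥ 2 and N ≥ s ≥ 1 be integers and let p ∈ Σ^N. If 2·e·s·N ≤ q^s (where e is Euler's number), then |O_p| ≥ q^N · exp(−N/(2s)). -/
/-! Let `f n` count the strings of length `n` that are `⊥ₛ p`. Prepending a letter to such a
string either keeps it `⊥ₛ p`, or creates a clash in the first window only; the string is then a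
window of `p` followed by a string of length `n + 1 - s` that is `⊥ₛ p`. Hence
`q f(n) ≤ f(n+1) + N f(n+1-s)`, and by strong induction `f(n+1) ≥ β q f(n)` with
`β = 2s/(2s+1)` as soon as `N ≤ (q - βq)(βq)^(s-1) = (βq)^s/(2s)`, which follows from
`2esN ≤ q^s` since `β^s ≥ e^(-1/2)`. As `β ≥ e^(-1/(2s))`,
`f(N) ≥ (βq)^N ≥ q^N e^(-N/(2s))`. -/

open Set

variable {α : Type*}

lemma win_drop (x : List α) (k i s : ℕ) : win (x.drop k) i s = win x (k + i) s := by
  simp only [win, List.drop_drop]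

lemma perp_of_length_lt {s : ℕ} {x : List α} (h : x.length < s) (y : List α) : perp s x y :=
  fun _ _ hi _ => absurd hi (by omega)

lemma perp_drop {s : ℕ} {x y : List α} (h : perp s x y) (k : ℕ) : perp s (x.drop k) y := by
  intro i j hi hj
  rw [win_drop]
  rcases Nat.eq_zero_or_pos s with rfl | hs
  · exact absurd rfl (h 0 0 (by omega) (by omega))
  · exact h _ j (by simp at hi; omega) hj

def windows (s : ℕ) (x : List α) : Set (List α) :=
  (fun j => win x j s) '' ↑(Finset.range (x.length + 1 - s))

lemma ncard_windows_le (s : ℕ) (x : List α) : (windows s x).ncard ≤ x.length + 1 - s :=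
  (ncard_image_le (Finset.finite_toSet _)).trans (by simp)

lemma take_mem_windows_of_not_perp_cons {s : ℕ} {a : α} {l y : List α} (hl : perp s l y)
    (h : ¬ perp s (a :: l) y) : (a :: l).take s ∈ windows s y := by
  simp only [perp, not_forall, not_not] at h
  obtain ⟨i, j, hi, hj, hij⟩ := h
  cases i with
  | zero => exact ⟨j, by simp; omega, hij.symm⟩
  | succ i => exact absurd hij (hl i j (by simp at hi; omega) hj)

def perpStrings (s : ℕ) (y : List α) (n : ℕ) : Set (List α) :=
  {c | c.length = n ∧ perp s c y}

lemma perpStrings_finite [Finite α] (s : ℕ) (y : List α) (n : ℕ) :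
    (perpStrings s y n).Finite :=
  (List.finite_length_eq α n).subset fun _ hc => hc.1

lemma perpStrings_zero {s : ℕ} (hs : 1 ≤ s) (y : List α) : perpStrings s y 0 = {[]} := by
  ext c
  simp only [perpStrings, mem_ofPred_eq, mem_singleton_iff, List.length_eq_zero_iff,
    and_iff_left_iff_imp]
  rintro rfl
  exact perp_of_length_lt (by simpa) y

lemma ncard_image_cons_prod (t : Set (List α)) :
    ((fun x : α × List α => x.1 :: x.2) '' (univ ×ˢ t)).ncard = Nat.card α * t.ncard := by
  rw [ncard_image_of_injective _ fun x y h => Prod.ext (List.cons.inj h).1 (List.cons.inj h).2,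
    ncard_prod, ncard_univ]

lemma cons_mem_perpStrings_or {s n : ℕ} (hs : 1 ≤ s) {y l : List α}
    (hl : l ∈ perpStrings s y n) (a : α) :
    a :: l ∈ perpStrings s y (n + 1) ∨
      a :: l ∈ (fun x => x.1 ++ x.2) '' (windows s y ×ˢ perpStrings s y (n + 1 - s)) := by
  by_cases h : perp s (a :: l) y
  · exact Or.inl ⟨by simp [hl.1], h⟩
  refine Or.inr ⟨((a :: l).take s, (a :: l).drop s),
    ⟨take_mem_windows_of_not_perp_cons hl.2 h, ?_, ?_⟩, List.take_append_drop s _⟩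
  · simp [hl.1]
  · obtain ⟨k, rfl⟩ : ∃ k, s = k + 1 := ⟨s - 1, by omega⟩
    exact perp_drop hl.2 k

lemma natCard_mul_ncard_perpStrings_le [Finite α] {s : ℕ} (hs : 1 ≤ s) (y : List α)
    (n : ℕ) :
    Nat.card α * (perpStrings s y n).ncard ≤
      (perpStrings s y (n + 1)).ncard +
        (y.length + 1 - s) * (perpStrings s y (n + 1 - s)).ncard := by
  have hfin := perpStrings_finite (α := α) s y
  have hwin : (windows s y).Finite := (Finset.finite_toSet _).image _
  calc Nat.card α * (perpStrings s y n).ncard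
      = ((fun x : α × List α => x.1 :: x.2) '' (univ ×ˢ perpStrings s y n)).ncard :=
        (ncard_image_cons_prod _).symm
    _ ≤ (perpStrings s y (n + 1) ∪
          (fun x => x.1 ++ x.2) '' (windows s y ×ˢ perpStrings s y (n + 1 - s))).ncard := by
        refine ncard_le_ncard ?_ ((hfin _).union ((hwin.prod (hfin _)).image _))
        rintro _ ⟨⟨a, l⟩, ⟨-, hl⟩, rfl⟩
        exact cons_mem_perpStrings_or hs hl a
    _ ≤ (perpStrings s y (n + 1)).ncard +
          (windows s y ×ˢ perpStrings s y (n + 1 - s)).ncard :=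
        (ncard_union_le _ _).trans (Nat.add_le_add_left (ncard_image_le (hwin.prod (hfin _))) _)
    _ ≤ _ := by
        rw [ncard_prod]
        exact Nat.add_le_add_left (Nat.mul_le_mul_right _ (ncard_windows_le s y)) _

lemma natCard_mul_ncard_perpStrings_le_of_lt [Finite α] {s n : ℕ} (h : n + 1 < s) (y : List α) :
    Nat.card α * (perpStrings s y n).ncard ≤ (perpStrings s y (n + 1)).ncard := by
  rw [← ncard_image_cons_prod]
  refine ncard_le_ncard ?_ (perpStrings_finite s y _)
  rintro _ ⟨⟨a, l⟩, ⟨-, hl⟩, rfl⟩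
  exact ⟨by simp [hl.1], perp_of_length_lt (by simp [hl.1]; omega) y⟩

lemma pow_mul_le_of_forall_mul_le {f : ℕ → ℝ} {r : ℝ} (hr : 0 ≤ r) (a : ℕ) :
    ∀ t, (∀ k < t, r * f (a + k) ≤ f (a + k + 1)) → r ^ t * f a ≤ f (a + t)
  | 0, _ => by simp
  | t + 1, h => calc
      r ^ (t + 1) * f a = r * (r ^ t * f a) := by ring
      _ ≤ r * f (a + t) :=
        mul_le_mul_of_nonneg_left (pow_mul_le_of_forall_mul_le hr a t fun k hk => h k (by omega)) hr
      _ ≤ f (a + (t + 1)) := h t (by omega)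

lemma mul_le_succ_of_recurrence {f : ℕ → ℝ} {q r M : ℝ} {s : ℕ} (hs : 1 ≤ s)
    (hf : ∀ n, 0 ≤ f n) (hr : 0 ≤ r) (hrq : r ≤ q) (hM : M ≤ (q - r) * r ^ (s - 1))
    (hshort : ∀ n, n + 1 < s → q * f n ≤ f (n + 1))
    (hrec : ∀ n, s ≤ n + 1 → q * f n ≤ f (n + 1) + M * f (n + 1 - s)) (n : ℕ) :
    r * f n ≤ f (n + 1) := by
  induction n using Nat.strong_induction_on with
  | _ n ih =>
  by_cases hn : n + 1 < s
  · exact (mul_le_mul_of_nonneg_right hrq (hf n)).trans (hshort n hn)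
  rw [not_lt] at hn
  have hchain : r ^ (s - 1) * f (n + 1 - s) ≤ f n := by
    have := pow_mul_le_of_forall_mul_le hr (n + 1 - s) (s - 1) fun k hk => ih _ (by omega)
    rwa [show n + 1 - s + (s - 1) = n by omega] at this
  have hbad : M * f (n + 1 - s) ≤ (q - r) * f n := calc
    M * f (n + 1 - s) ≤ (q - r) * r ^ (s - 1) * f (n + 1 - s) :=
      mul_le_mul_of_nonneg_right hM (hf _)
    _ = (q - r) * (r ^ (s - 1) * f (n + 1 - s)) := by ring
    _ ≤ (q - r) * f n := mul_le_mul_of_nonneg_left hchain (by linarith)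
  linarith [hrec n hn]

noncomputable def survivalRatio (s : ℕ) : ℝ := 2 * s / (2 * s + 1)

lemma survivalRatio_nonneg (s : ℕ) : 0 ≤ survivalRatio s := by
  unfold survivalRatio; positivity

lemma survivalRatio_le_one (s : ℕ) : survivalRatio s ≤ 1 := by
  unfold survivalRatio
  rw [div_le_one (by positivity)]
  linarith

lemma exp_neg_inv_le_survivalRatio {s : ℕ} (hs : 1 ≤ s) :
    Real.exp (-(1 / (2 * s))) ≤ survivalRatio s := by
  have hs' : (0 : ℝ) < s := by exact_mod_cast hs
  have hinv : (survivalRatio s)⁻¹ = 1 / (2 * s) + 1 := by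
    unfold survivalRatio
    field_simp
    ring
  rw [Real.exp_neg, inv_le_comm₀ (Real.exp_pos _) (by unfold survivalRatio; positivity), hinv]
  exact Real.add_one_le_exp _

lemma div_le_growth_margin {s : ℕ} (hs : 1 ≤ s) {q : ℝ} (hq : 0 ≤ q) :
    q ^ s / (2 * Real.exp 1 * s) ≤
      (q - survivalRatio s * q) * (survivalRatio s * q) ^ (s - 1) := by
  set β := survivalRatio s
  have hs' : (0 : ℝ) < s := by exact_mod_cast hs
  have hmargin : (q - β * q) * (β * q) ^ (s - 1) = (β * q) ^ s / (2 * s) := by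
    have hcompl : q - β * q = β * q / (2 * s) := by
      simp only [β, survivalRatio]
      field_simp
      ring
    rw [hcompl, div_mul_eq_mul_div, ← pow_succ', Nat.sub_add_cancel hs]
  have hβs : Real.exp (-1) ≤ β ^ s := calc
    Real.exp (-1) ≤ Real.exp (-(1 / (2 * s))) ^ s := by
      rw [← Real.exp_nat_mul, Real.exp_le_exp]
      field_simp
      norm_num
    _ ≤ β ^ s := pow_le_pow_left₀ (Real.exp_pos _).le (exp_neg_inv_le_survivalRatio hs) s
  calc q ^ s / (2 * Real.exp 1 * s) = q ^ s * Real.exp (-1) / (2 * s) := by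
        rw [Real.exp_neg]; field_simp
    _ ≤ q ^ s * β ^ s / (2 * s) := by gcongr
    _ = (q - β * q) * (β * q) ^ (s - 1) := by rw [hmargin, mul_pow, mul_comm]

theorem stmt8_general (q N s : ℕ) (hq : 2 ≤ q) (hs : 1 ≤ s)
    (p : List (ZMod q)) (hp : p.length = N)
    (h : 2 * Real.exp 1 * (s : ℝ) * (N : ℝ) ≤ (q : ℝ) ^ s) :
    (q : ℝ) ^ N * Real.exp (-(N : ℝ) / (2 * s)) ≤ ((Op q N s p).ncard : ℝ) := by
  have : NeZero q := ⟨by omega⟩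
  set β := survivalRatio s
  set f : ℕ → ℝ := fun n => (perpStrings s p n).ncard
  have hM : ((N + 1 - s : ℕ) : ℝ) ≤ (q - β * q) * (β * q) ^ (s - 1) := calc
    ((N + 1 - s : ℕ) : ℝ) ≤ N := by exact_mod_cast (by omega : N + 1 - s ≤ N)
    _ ≤ q ^ s / (2 * Real.exp 1 * s) := by rw [le_div_iff₀ (by positivity)]; linarith
    _ ≤ _ := div_le_growth_margin hs q.cast_nonneg
  have hr : 0 ≤ β * q := mul_nonneg (survivalRatio_nonneg s) q.cast_nonneg
  have hgrowth : ∀ n, β * q * f n ≤ f (n + 1) :=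
    mul_le_succ_of_recurrence hs (fun n => by positivity) hr
      (mul_le_of_le_one_left q.cast_nonneg (survivalRatio_le_one s)) hM
      (fun n hn => by
        have := natCard_mul_ncard_perpStrings_le_of_lt hn p
        rw [Nat.card_zmod] at this
        simp only [f]
        exact_mod_cast this)
      (fun n _ => by
        have := natCard_mul_ncard_perpStrings_le hs p n
        rw [Nat.card_zmod, hp] at this
        simp only [f]
        exact_mod_cast this)
  have hf0 : f 0 = 1 := by simp [f, perpStrings_zero hs]
  calc (q : ℝ) ^ N * Real.exp (-(N : ℝ) / (2 * s))
      = q ^ N * Real.exp (-(1 / (2 * s))) ^ N := by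
        rw [← Real.exp_nat_mul]; congr 2; ring
    _ ≤ q ^ N * β ^ N := by gcongr; exact exp_neg_inv_le_survivalRatio hs
    _ = (β * q) ^ N * f 0 := by rw [hf0, mul_pow]; ring
    _ ≤ f (0 + N) := pow_mul_le_of_forall_mul_le hr 0 N fun k _ => hgrowth _
    _ = (Op q N s p).ncard := by rw [zero_add]; rfl

/-- (Lovász-local-lemma estimate) If `2·e·s·N ≤ q^s` then `|O_p| ≥ q^N · exp(−N/(2s))`. -/
theorem stmt8 (q N s : ℕ) (hq : 2 ≤ q) (hs : 1 ≤ s) (hsN : s ≤ N)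
    (p : List (ZMod q)) (hp : p.length = N)
    (h : 2 * Real.exp 1 * (s : ℝ) * (N : ℝ) ≤ (q : ℝ) ^ s) :
    (q : ℝ) ^ N * Real.exp (-(N : ℝ) / (2 * s)) ≤ ((Op q N s p).ncard : ℝ) :=
  stmt8_general q N s hq hs p hp h
end

section
/- Let q ≥ 2, m ≥ 2, N ≥ s ≥ 1 be integers and set n = mN. Suppose p ∈ Σ^N has distinct s-windows, and let c_0,…,c_{m−2} ∈ O_p and c′_0,…,c′_{m−2} ∈ O_p. Let z ∈ Σ^{mN} be the interleaving of p with (c_0,…,c_{m−2}) and z′ ∈ Σ^{mN} the interleaving of p with (c′_0,…,c′_{m−2}). If for some locations 0 ≤ i, i′ ≤ mN − ms the length-(ms) windows satisfy z^{(i)} = z′^{(i′)} (equality as strings of length ms), then i = i′. -/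
/-- `p` has distinct `s`-windows: equal length-`s` windows occur only at equal locations. -/
def distinctWindows {α : Type*} (s : ℕ) (p : List α) : Prop :=
  ∀ i j, i + s ≤ p.length → j + s ≤ p.length → win p i s = win p j s → i = j

/-- The interleaving of the pilot `p` with `m − 1` strings `c₀, …, c_{m−2}`, all of length
`N`: the string `z ∈ Σ^{mN}` with `z_{mt} = p_t` and `z_{mt+r} = (c_{r−1})_t` for
`1 ≤ r ≤ m − 1` and `0 ≤ t < N`. -/
def interleave (q m N : ℕ) (p : List (ZMod q)) (c : Fin (m - 1) → List (ZMod q)) :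
    List (ZMod q) :=
  List.ofFn fun u : Fin (m * N) =>
    if (u : ℕ) % m = 0 then p.getD ((u : ℕ) / m) 0
    else if h : (u : ℕ) % m - 1 < m - 1 then (c ⟨(u : ℕ) % m - 1, h⟩).getD ((u : ℕ) / m) 0
    else 0

lemma win_length {α : Type*} (x : List α) (i L : ℕ) (h : i + L ≤ x.length) :
    (win x i L).length = L := by
  simp [win]; omega

lemma win_getD {α : Type*} (x : List α) (i L k : ℕ) (d : α) (hk : k < L)
    (h : i + L ≤ x.length) : (win x i L).getD k d = x.getD (i + k) d := by
  have h1 : k < (win x i L).length := by rw [win_length _ _ _ h]; exact hk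
  have h2 : i + k < x.length := by omega
  rw [List.getD_eq_getElem _ _ h1, List.getD_eq_getElem _ _ h2]
  simp [win, List.getElem_take, List.getElem_drop]

lemma win_ext {α : Type*} (x y : List α) (d : α) (ix iy L : ℕ) (hx : ix + L ≤ x.length)
    (hy : iy + L ≤ y.length) (h : ∀ k < L, x.getD (ix + k) d = y.getD (iy + k) d) :
    win x ix L = win y iy L := by
  apply List.ext_getElem
  · rw [win_length _ _ _ hx, win_length _ _ _ hy]
  · intro n h1 h2
    have hn : n < L := by rwa [win_length _ _ _ hx] at h1
    rw [← List.getD_eq_getElem _ d h1, ← List.getD_eq_getElem _ d h2,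
      win_getD _ _ _ _ _ hn hx, win_getD _ _ _ _ _ hn hy]
    exact h n hn

lemma interleave_length (q m N : ℕ) (p : List (ZMod q)) (c : Fin (m - 1) → List (ZMod q)) :
    (interleave q m N p c).length = m * N := by simp [interleave]

lemma interleave_getD_pilot (q m N u : ℕ) (p : List (ZMod q)) (c : Fin (m - 1) → List (ZMod q))
    (hu : u < m * N) (h0 : u % m = 0) :
    (interleave q m N p c).getD u 0 = p.getD (u / m) 0 := by
  have hlen : u < (interleave q m N p c).length := by rw [interleave_length]; exact hu
  rw [List.getD_eq_getElem _ _ hlen]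
  simp [interleave, List.getElem_ofFn, h0]

lemma interleave_getD_data (q m N u : ℕ) (p : List (ZMod q)) (c : Fin (m - 1) → List (ZMod q))
    (hu : u < m * N) (h0 : u % m ≠ 0) (h1 : u % m - 1 < m - 1) :
    (interleave q m N p c).getD u 0 = (c ⟨u % m - 1, h1⟩).getD (u / m) 0 := by
  have hlen : u < (interleave q m N p c).length := by rw [interleave_length]; exact hu
  rw [List.getD_eq_getElem _ _ hlen]
  simp [interleave, List.getElem_ofFn, h0, h1]

/-- Location identifiability: if a length-`ms` window of the interleaving of `p` (having
distinct `s`-windows) with `c₀, …, c_{m−2} ∈ O_p` at location `i` equals a length-`ms`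
window of the interleaving of `p` with `c′₀, …, c′_{m−2} ∈ O_p` at location `i′`,
then `i = i′`. -/
theorem stmt9 (q m N s : ℕ) (hq : 2 ≤ q) (hm : 2 ≤ m) (hs : 1 ≤ s) (hsN : s ≤ N)
    (p : List (ZMod q)) (hp : p.length = N) (hdw : distinctWindows s p)
    (c c' : Fin (m - 1) → List (ZMod q))
    (hc : ∀ i, c i ∈ Op q N s p) (hc' : ∀ i, c' i ∈ Op q N s p)
    (i i' : ℕ) (hi : i + m * s ≤ m * N) (hi' : i' + m * s ≤ m * N)
    (hw : win (interleave q m N p c) i (m * s) = win (interleave q m N p c') i' (m * s)) :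
    i = i' := by
  have hm0 : 0 < m := by omega
  set z := interleave q m N p c with hz
  set z' := interleave q m N p c' with hz'
  have hzl : z.length = m * N := interleave_length _ _ _ _ _
  have hz'l : z'.length = m * N := interleave_length _ _ _ _ _
  -- key elementwise equality
  have hkey : ∀ k < m * s, z.getD (i + k) 0 = z'.getD (i' + k) 0 := by
    intro k hk
    have := congrArg (fun l => l.getD k (0 : ZMod q)) hw
    rwa [win_getD _ _ _ _ _ hk (by omega), win_getD _ _ _ _ _ hk (by omega)] at this
  -- choose b with i ≤ m*b < i + m
  obtain ⟨b, hb1, hb2⟩ : ∃ b, i ≤ m * b ∧ m * b < i + m := by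
    have h1 : i = m * (i / m) + i % m := (Nat.div_add_mod i m).symm
    have h2 : i % m < m := Nat.mod_lt _ hm0
    rcases Nat.eq_zero_or_pos (i % m) with h | h
    · exact ⟨i / m, by omega, by omega⟩
    · exact ⟨i / m + 1, by rw [Nat.mul_add]; omega, by rw [Nat.mul_add]; omega⟩
  set k₀ := m * b - i with hk₀
  have hik : i + k₀ = m * b := by omega
  have hk₀m : k₀ < m := by omega
  set d := (i' + k₀) / m with hd
  set ρ := (i' + k₀) % m with hρ
  have hdρ1 : i' + k₀ = m * d + ρ := by rw [hd, hρ]; exact (Nat.div_add_mod _ m).symm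
  have hρm : ρ < m := Nat.mod_lt _ hm0
  -- bounds
  have hbs : b + s ≤ N := by
    have : m * (b + s) < m * (N + 1) := by
      rw [Nat.mul_add, Nat.mul_add]; omega
    have := Nat.lt_of_mul_lt_mul_left this
    omega
  have hds : d + s ≤ N := by
    have : m * (d + s) < m * (N + 1) := by
      rw [Nat.mul_add, Nat.mul_add]; omega
    have := Nat.lt_of_mul_lt_mul_left this
    omega
  -- main elementwise identity on pilot positions
  have hkt : ∀ t < s, k₀ + m * t < m * s := by
    intro t ht
    have : m * (t + 1) ≤ m * s := Nat.mul_le_mul_left m (by omega)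
    rw [Nat.mul_add] at this; omega
  have hE : ∀ t < s, p.getD (b + t) 0 = z'.getD (i' + (k₀ + m * t)) 0 := by
    intro t ht
    have h1 : i + (k₀ + m * t) = m * (b + t) := by rw [Nat.mul_add]; omega
    have h2 : m * (b + t) < m * N := by
      have := hkt t ht; omega
    have hz1 : z.getD (i + (k₀ + m * t)) 0 = p.getD (b + t) 0 := by
      rw [h1, hz, interleave_getD_pilot _ _ _ _ _ _ h2 (Nat.mul_mod_right m _),
        Nat.mul_div_cancel_left _ hm0]
    rw [← hz1]
    exact hkey _ (hkt t ht)
  have hvdiv : ∀ t, (i' + (k₀ + m * t)) / m = d + t ∧ (i' + (k₀ + m * t)) % m = ρ := by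
    intro t
    have h1 : i' + (k₀ + m * t) = m * (d + t) + ρ := by rw [Nat.mul_add]; omega
    constructor
    · rw [h1, Nat.mul_add_div hm0, Nat.div_eq_of_lt hρm]; omega
    · rw [h1, Nat.mul_add_mod, Nat.mod_eq_of_lt hρm]
  have hvlt : ∀ t < s, i' + (k₀ + m * t) < m * N := by
    intro t ht; have := hkt t ht; omega
  rcases Nat.eq_zero_or_pos ρ with hρ0 | hρpos
  · -- pilot vs pilot
    have hww : win p b s = win p d s := by
      apply win_ext _ _ (0 : ZMod q) _ _ _ (by omega) (by omega)
      intro t ht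
      rw [hE t ht, hz',
        interleave_getD_pilot _ _ _ _ _ _ (hvlt t ht) (by rw [(hvdiv t).2, hρ0]),
        (hvdiv t).1]
    have hbd : b = d := hdw b d (by omega) (by omega) hww
    have : m * b = m * d := by rw [hbd]
    omega
  · -- pilot vs data: contradiction with perp
    have hρ1 : ρ - 1 < m - 1 := by omega
    have hww : win p b s = win (c' ⟨ρ - 1, hρ1⟩) d s := by
      apply win_ext _ _ (0 : ZMod q) _ _ _ (by omega)
        (by rw [(hc' ⟨ρ - 1, hρ1⟩).1]; omega)
      intro t ht
      rw [hE t ht, hz']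
      have hmod := (hvdiv t).2
      rw [interleave_getD_data _ _ _ _ _ _ (hvlt t ht) (by omega) (by rw [hmod]; omega)]
      have : (⟨(i' + (k₀ + m * t)) % m - 1, by rw [hmod]; omega⟩ : Fin (m - 1)) = ⟨ρ - 1, hρ1⟩ := by
        ext; simp [hmod]
      rw [this, (hvdiv t).1]
    exact absurd hww.symm ((hc' ⟨ρ - 1, hρ1⟩).2 d b (by rw [(hc' ⟨ρ - 1, hρ1⟩).1]; omega) (by omega))
end

section
/- Let q ≥ 2, m ≥ 2, N ≥ s ≥ 1 be integers, set n = mN, and let Lmax ≥ ms be an integer. Suppose p ∈ Σ^N has distinct s-windows, and define C_pilot := { interleaving of p with (c_0,…,c_{m−2}) : c_0,…,c_{m−2} ∈ O_p }. Then C_pilot ⊆ Σ^n is an (ms, Lmax)-single-strand torn-paper code: for any two distinct z, z′ ∈ C_pilot, T_{ms}^{Lmax}(z) ∩ T_{ms}^{Lmax}(z′) = ∅. -/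
/-- The set of `(Lmin, Lmax)`-segmentations of a string `x` (a list over the alphabet):
multisets arising from decompositions `x = u₀ ∘ u₁ ∘ ⋯ ∘ u_{m-1}` into nonempty consecutive
substrings, where every substring except possibly the last has length at least `Lmin`,
and every substring has length at most `Lmax`. -/
def segSpec {α : Type*} (Lmin Lmax : ℕ) (x : List α) : Set (Multiset (List α)) :=
  {M | ∃ l : List (List α),
        l.flatten = x ∧
        (∀ u ∈ l, u ≠ [] ∧ u.length ≤ Lmax) ∧
        (∀ u ∈ l.dropLast, Lmin ≤ u.length) ∧
        (l : Multiset (List α)) = M}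

/-- The pilot construction: all interleavings of the pilot `p` with `m − 1` strings
from `O_p`. -/
def Cpilot (q m N s : ℕ) (p : List (ZMod q)) : Set (List (ZMod q)) :=
  {z | ∃ c : Fin (m - 1) → List (ZMod q), (∀ i, c i ∈ Op q N s p) ∧ z = interleave q m N p c}

section Windows

variable {α : Type*}

theorem win_eq_win_of_getElem? {x y : List α} {i j s : ℕ}
    (h : ∀ k < s, x[i + k]? = y[j + k]?) : win x i s = win y j s := by
  refine List.ext_getElem? fun k => ?_
  simp only [win, List.getElem?_take, List.getElem?_drop]
  split_ifs with hk
  exacts [h k hk, rfl]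

theorem getElem?_eq_of_prefix_drop {u x : List α} {a : ℕ} (h : u <+: x.drop a) {i : ℕ}
    (hi : i < u.length) : x[a + i]? = u[i]? := by
  rw [← List.getElem?_drop, List.getElem?_eq_getElem hi]
  exact List.prefix_iff_getElem?.1 h i hi

end Windows

theorem exists_add_eq_mul {m : ℕ} (hm : 0 < m) (a : ℕ) : ∃ ρ t, ρ < m ∧ a + ρ = m * t := by
  refine ⟨m - 1 - (a + m - 1) % m, (a + m - 1) / m, by omega, ?_⟩
  have := Nat.div_add_mod (a + m - 1) m
  have := Nat.mod_lt (a + m - 1) hm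
  omega

theorem getElem?_interleave_mul {q m N : ℕ} (hm : 0 < m) {p : List (ZMod q)} (hp : p.length = N)
    (c : Fin (m - 1) → List (ZMod q)) (t : ℕ) :
    (interleave q m N p c)[m * t]? = p[t]? := by
  by_cases ht : t < N
  · have : m * t < m * N := Nat.mul_lt_mul_of_pos_left ht hm
    simp [interleave, this, Nat.mul_div_cancel_left t hm, hp ▸ ht]
  · have : ¬ m * t < m * N := fun h => ht (Nat.lt_of_mul_lt_mul_left h)
    simp [interleave, this, hp ▸ ht]

theorem getElem?_interleave_mul_add_succ {q m N : ℕ} (p : List (ZMod q))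
    {c : Fin (m - 1) → List (ZMod q)} {j : Fin (m - 1)} (hc : (c j).length = N) (t : ℕ) :
    (interleave q m N p c)[m * t + (j + 1)]? = (c j)[t]? := by
  have hj : (j : ℕ) + 1 < m := by omega
  have hmod : (m * t + (j + 1)) % m = j + 1 := by
    rw [Nat.mul_add_mod, Nat.mod_eq_of_lt hj]
  have hdiv : (m * t + (j + 1)) / m = t := by
    rw [Nat.mul_add_div (by omega), Nat.div_eq_of_lt hj, add_zero]
  by_cases ht : t < N
  · have : m * t + (j + 1) < m * N := by nlinarith
    simp [interleave, this, hmod, hdiv, hc ▸ ht]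
  · have : ¬ m * t + (j + 1) < m * N := fun h => ht (by nlinarith)
    simp [interleave, this, hc ▸ ht]

def FactorsAligned {α : Type*} (L : ℕ) (x y : List α) : Prop :=
  ∀ u a b, L ≤ u.length → u <+: x.drop a → u <+: y.drop b → a = b

theorem interleave_factorsAligned {q m N s : ℕ} (hm : 0 < m) (hs : 0 < s) {p : List (ZMod q)}
    (hp : p.length = N) (hdw : distinctWindows s p) (c : Fin (m - 1) → List (ZMod q))
    {c' : Fin (m - 1) → List (ZMod q)} (hc' : ∀ j, c' j ∈ Op q N s p) :
    FactorsAligned (m * s) (interleave q m N p c) (interleave q m N p c') := by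
  intro u a a' hu ha ha'
  -- `a + ρ` is the first pilot position covered by `u`, so `u` reads the pilot at `ρ + m * k`
  obtain ⟨ρ, t, hρ, hat⟩ := exists_add_eq_mul hm a
  have hρk : ∀ k < s, ρ + m * k < u.length := fun k hk => by
    have := Nat.mul_le_mul_left m (show k + 1 ≤ s by omega)
    rw [Nat.mul_succ] at this
    omega
  have hlen_of_reads : ∀ {x : List (ZMod q)} {i : ℕ},
      (∀ k < s, x[i + k]? = u[ρ + m * k]?) → i + s ≤ x.length := by
    intro x i h
    have h' := h (s - 1) (by omega)
    rw [List.getElem?_eq_getElem (hρk _ (by omega))] at h'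
    have := (List.getElem?_eq_some_iff.1 h').1
    omega
  have hpilot : ∀ k < s, p[t + k]? = u[ρ + m * k]? := fun k hk => by
    rw [← getElem?_interleave_mul hm hp c, ← getElem?_eq_of_prefix_drop ha (hρk k hk)]
    congr 1
    rw [Nat.mul_add]
    omega
  obtain ⟨t', r, hr, hat'⟩ : ∃ t' r, r < m ∧ a' + ρ = m * t' + r :=
    ⟨_, _, Nat.mod_lt _ hm, (Nat.div_add_mod (a' + ρ) m).symm⟩
  have hrow : ∀ k < s, (interleave q m N p c')[m * (t' + k) + r]? = u[ρ + m * k]? :=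
    fun k hk => by
      rw [← getElem?_eq_of_prefix_drop ha' (hρk k hk)]
      congr 1
      rw [Nat.mul_add]
      omega
  rcases Nat.eq_zero_or_pos r with rfl | hr0
  · have hp' : ∀ k < s, p[t' + k]? = u[ρ + m * k]? := fun k hk => by
      rw [← hrow k hk, add_zero, getElem?_interleave_mul hm hp]
    have htt : t = t' := hdw t t' (hp ▸ hlen_of_reads hpilot) (hp ▸ hlen_of_reads hp')
      (win_eq_win_of_getElem? fun k hk => (hpilot k hk).trans (hp' k hk).symm)
    subst htt
    omega
  · obtain ⟨j, hj⟩ : ∃ j : Fin (m - 1), (j : ℕ) + 1 = r := ⟨⟨r - 1, by omega⟩, by simp; omega⟩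
    have hc'j : ∀ k < s, (c' j)[t' + k]? = u[ρ + m * k]? := fun k hk => by
      rw [← hrow k hk, ← hj, getElem?_interleave_mul_add_succ p (hc' j).1]
    exact absurd (win_eq_win_of_getElem? fun k hk => (hc'j k hk).trans (hpilot k hk).symm)
      ((hc' j).2 t' t (hlen_of_reads hc'j) (hlen_of_reads hpilot))

section Segmentation

variable {α : Type*}

theorem getElem_prefix_drop_flatten (l : List (List α)) {j : ℕ} (hj : j < l.length) :
    l[j] <+: l.flatten.drop ((l.map List.length).take j).sum := by
  rw [List.drop_sum_flatten, List.drop_eq_getElem_cons hj, List.flatten_cons]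
  exact List.prefix_append _ _

theorem sum_take_add_length_getElem (l : List (List α)) {j : ℕ} (hj : j + 1 = l.length) :
    ((l.map List.length).take j).sum + (l[j]'(by omega)).length = l.flatten.length := by
  rw [List.length_flatten, ← List.sum_take_add_sum_drop (l.map List.length) j,
    List.drop_eq_getElem_cons (by simp; omega), List.drop_eq_nil_of_le (by simp; omega)]
  simp

theorem succ_eq_length_of_length_lt {L : ℕ} {l : List (List α)}
    (hmin : ∀ u ∈ l.dropLast, L ≤ u.length) {j : ℕ} (hj : j < l.length)
    (hshort : l[j].length < L) : j + 1 = l.length := by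
  by_contra hlast
  have hj' : j < l.dropLast.length := by simp; omega
  have := hmin _ (List.getElem_mem hj')
  rw [List.getElem_dropLast] at this
  omega

theorem eq_flatten_of_forall_prefix_drop {l : List (List α)} {y : List α}
    (hlen : y.length = l.flatten.length)
    (h : ∀ j (hj : j < l.length), l[j] <+: y.drop ((l.map List.length).take j).sum) :
    y = l.flatten := by
  induction l generalizing y with
  | nil => simpa using hlen
  | cons u t ih =>
    have hu : u <+: y := by
      have h0 := h 0 (by simp)
      rwa [List.getElem_cons_zero, List.take_zero, List.sum_nil, List.drop_zero] at h0
    have ht : y.drop u.length = t.flatten := ih (by simp at hlen ⊢; omega) fun j hj => by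
      have hj1 := h (j + 1) (by simpa using hj)
      rwa [List.getElem_cons_succ, List.map_cons, List.take_succ_cons, List.sum_cons,
        ← List.drop_drop] at hj1
    calc y = y.take u.length ++ y.drop u.length := (List.take_append_drop _ _).symm
      _ = (u :: t).flatten := by rw [← List.prefix_iff_eq_take.1 hu, ht, List.flatten_cons]

theorem eq_of_mem_segSpec_of_factorsAligned {Lmin Lmax : ℕ} {x y : List α}
    {M : Multiset (List α)} (hx : M ∈ segSpec Lmin Lmax x) (hy : M ∈ segSpec Lmin Lmax y)
    (hxy : FactorsAligned Lmin x y) : x = y := by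
  obtain ⟨l, rfl, -, hmin, hlM⟩ := hx
  obtain ⟨l', rfl, -, hmin', rfl⟩ := hy
  have hperm : l.Perm l' := Multiset.coe_eq_coe.1 hlM
  have hlen : l.flatten.length = l'.flatten.length := by
    simp only [List.length_flatten]
    exact (hperm.map _).sum_eq
  refine (eq_flatten_of_forall_prefix_drop hlen.symm fun j hj => ?_).symm
  obtain ⟨j', hj', hjj'⟩ := List.getElem_of_mem (hperm.subset (List.getElem_mem hj))
  have hpre' := getElem_prefix_drop_flatten l' hj'
  rw [hjj'] at hpre'
  convert hpre' using 2
  by_cases hlong : Lmin ≤ l[j].length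
  · exact hxy _ _ _ hlong (getElem_prefix_drop_flatten l hj) hpre'
  · have e := sum_take_add_length_getElem l (succ_eq_length_of_length_lt hmin hj (by omega))
    have e' := sum_take_add_length_getElem l'
      (succ_eq_length_of_length_lt hmin' hj' (by rw [hjj']; omega))
    simp only [hjj'] at e'
    omega

end Segmentation

theorem stmt10_general (q m N s Lmax : ℕ) (hm : 2 ≤ m) (hs : 1 ≤ s)
    (p : List (ZMod q)) (hp : p.length = N)
    (hdw : distinctWindows s p) :
    ∀ z ∈ Cpilot q m N s p, ∀ z' ∈ Cpilot q m N s p, z ≠ z' →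
      segSpec (m * s) Lmax z ∩ segSpec (m * s) Lmax z' = ∅ := by
  rintro _ ⟨c, -, rfl⟩ _ ⟨c', hc', rfl⟩ hne
  refine Set.eq_empty_of_forall_notMem fun M ⟨hM, hM'⟩ => hne ?_
  exact eq_of_mem_segSpec_of_factorsAligned hM hM'
    (interleave_factorsAligned (by omega) hs hp hdw c hc')

/-- The pilot construction is an `(ms, Lmax)`-single-strand torn-paper code: distinct
codewords have disjoint `(ms, Lmax)`-segmentation spectra. -/
theorem stmt10 (q m N s Lmax : ℕ) (hq : 2 ≤ q) (hm : 2 ≤ m) (hs : 1 ≤ s) (hsN : s ≤ N)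
    (hLmax : m * s ≤ Lmax) (p : List (ZMod q)) (hp : p.length = N)
    (hdw : distinctWindows s p) :
    ∀ z ∈ Cpilot q m N s p, ∀ z' ∈ Cpilot q m N s p, z ≠ z' →
      segSpec (m * s) Lmax z ∩ segSpec (m * s) Lmax z' = ∅ :=
  stmt10_general q m N s Lmax hm hs p hp hdw
end

section
/- Let Σ be a finite additive abelian group (the alphabet with its ring structure, e.g. ZMod q), and let n ≥ 1, t ≥ 1 and 0 < ℓ ≤ n be integers and x, y ∈ Σ^n. Then x and y are confusable under t bursts of errors of lengths at most ℓ if and only if they are confusable under 2t bursts of erasures of lengths at most ℓ. Here: x and y are confusable under t bursts of errors of lengths at most ℓ if there exist e⁰, e¹ ∈ Σ^n and locations k⁰_0,…,k⁰_{t−1}, k¹_0,…,k¹_{t−1} ∈ [n] such that supp(e^i) ⊆ ⋃_{j∈[t]} (k^i_j + [ℓ]) for i = 0,1 and x + e⁰ = y + e¹; and x and y are confusable under 2t bursts of erasures of lengths at most ℓ if there exist locations k_0,…,k_{2t−1} ∈ [n] such that x_j = y_j for every coordinate j ∉ ⋃_{i∈[2t]} (k_i + [ℓ]). -/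
/-- Two strings `x, y ∈ Σ^n` over a finite additive abelian alphabet `Σ` are confusable
under `t` bursts of errors of lengths at most `ℓ` if and only if they are confusable under
`2t` bursts of erasures of lengths at most `ℓ`. -/
theorem stmt12 (A : Type*) [AddCommGroup A] [Fintype A]
    (n t ℓ : ℕ) (hn : 1 ≤ n) (ht : 1 ≤ t) (hℓ : 0 < ℓ) (hℓn : ℓ ≤ n)
    (x y : Fin n → A) :
    (∃ (e₀ e₁ : Fin n → A) (k₀ k₁ : Fin t → ℕ),
      (∀ i, k₀ i < n) ∧ (∀ i, k₁ i < n) ∧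
      (∀ j : Fin n, e₀ j ≠ 0 → ∃ i, k₀ i ≤ (j : ℕ) ∧ (j : ℕ) < k₀ i + ℓ) ∧
      (∀ j : Fin n, e₁ j ≠ 0 → ∃ i, k₁ i ≤ (j : ℕ) ∧ (j : ℕ) < k₁ i + ℓ) ∧
      x + e₀ = y + e₁) ↔
    (∃ k : Fin (2 * t) → ℕ, (∀ i, k i < n) ∧
      ∀ j : Fin n, (∀ i, ¬(k i ≤ (j : ℕ) ∧ (j : ℕ) < k i + ℓ)) → x j = y j) := by
  constructor
  · rintro ⟨e₀, e₁, k₀, k₁, hk₀, hk₁, hs₀, hs₁, heq⟩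
    refine ⟨fun i => if h : (i : ℕ) < t then k₀ ⟨i, h⟩ else k₁ ⟨(i : ℕ) - t, by omega⟩,
      fun i => ?_, fun j hj => ?_⟩
    · dsimp only; split <;> [exact hk₀ _; exact hk₁ _]
    · have h0 : e₀ j = 0 := by
        by_contra h
        obtain ⟨i, hi⟩ := hs₀ j h
        exact hj ⟨(i : ℕ), by omega⟩ (by simpa [i.isLt] using hi)
      have h1 : e₁ j = 0 := by
        by_contra h
        obtain ⟨i, hi⟩ := hs₁ j h
        refine hj ⟨(i : ℕ) + t, by omega⟩ ?_
        have hlt : ¬ ((i : ℕ) + t < t) := by omega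
        simpa [hlt] using hi
      have := congrFun heq j
      simp only [Pi.add_apply, h0, h1, add_zero] at this
      exact this
  · rintro ⟨k, hk, hcov⟩
    classical
    set C₀ : Fin n → Prop := fun j => ∃ i : Fin t, k ⟨(i : ℕ), by omega⟩ ≤ (j : ℕ) ∧ (j : ℕ) < k ⟨(i : ℕ), by omega⟩ + ℓ with hC₀
    set C₁ : Fin n → Prop := fun j => ∃ i : Fin t, k ⟨(i : ℕ) + t, by omega⟩ ≤ (j : ℕ) ∧ (j : ℕ) < k ⟨(i : ℕ) + t, by omega⟩ + ℓ with hC₁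
    have key : ∀ j : Fin n, ¬ C₀ j → ¬ C₁ j → x j = y j := by
      intro j h0 h1
      refine hcov j fun i => ?_
      rintro ⟨ha, hb⟩
      by_cases hit : (i : ℕ) < t
      · exact h0 ⟨⟨(i : ℕ), hit⟩, by simpa using ha, by simpa using hb⟩
      · refine h1 ⟨⟨(i : ℕ) - t, by omega⟩, ?_, ?_⟩ <;>
        · have hi : (⟨(i : ℕ) - t + t, by omega⟩ : Fin (2 * t)) = i := Fin.ext (by simp; omega)
          rw [show (⟨(⟨(i : ℕ) - t, by omega⟩ : Fin t) + t, by omega⟩ : Fin (2 * t)) = i from Fin.ext (by simp; omega)]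
          assumption
    refine ⟨fun j => if C₀ j then y j - x j else 0,
      fun j => if C₀ j then 0 else x j - y j,
      fun i => k ⟨(i : ℕ), by omega⟩, fun i => k ⟨(i : ℕ) + t, by omega⟩,
      fun i => hk _, fun i => hk _, fun j hj => ?_, fun j hj => ?_, ?_⟩
    · by_cases hc : C₀ j
      · exact hc
      · simp [hc] at hj
    · by_cases hc : C₀ j
      · simp [hc] at hj
      · simp only [hc, if_false] at hj
        by_contra h
        push_neg at h
        have h1 : ¬ C₁ j := by rintro ⟨i, ha, hb⟩; exact absurd (h i ha) (by omega)
        exact hj (by rw [key j hc h1]; simp)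
    · funext j
      by_cases hc : C₀ j
      · simp [hc]
      · by_cases h1 : C₁ j
        · simp [hc]
        · simp [hc, key j hc h1]
end
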